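/- arXiv:1710.07469 — 8 statements merged into one kernel-verified Lean document; each statement's English description precedes it below -/
import Mathlib

section
/- Let X be a normed space, C ⊆ X nonempty, d(y) = dist(y, C) the distance function and d₂ = d². Then for every z ∈ C and x₁, x₂ ∈ X with ‖x₂‖ ≤ ‖x₁‖, one has |d₂(z+x₁+x₂) − d₂(z+x₁) − d₂(z+x₂) + d₂(z)| ≤ 4‖x₁‖·‖x₂‖. -/
theorem stmt1 {X : Type*} [NormedAddCommGroup X]
    (C : Set X) (hC : C.Nonempty) (z x₁ x₂ : X) (hz : z ∈ C) (h : ‖x₂‖ ≤ ‖x₁‖) :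
    |(Metric.infDist (z + x₁ + x₂) C) ^ 2 - (Metric.infDist (z + x₁) C) ^ 2
      - (Metric.infDist (z + x₂) C) ^ 2 + (Metric.infDist z C) ^ 2|
      ≤ 4 * ‖x₁‖ * ‖x₂‖ := by
  have hz0 : Metric.infDist z C = 0 := Metric.infDist_zero_of_mem hz
  have ha := Metric.infDist_nonneg (s := C) (x := z + x₁ + x₂)
  have hb := Metric.infDist_nonneg (s := C) (x := z + x₁)
  have hc := Metric.infDist_nonneg (s := C) (x := z + x₂)
  have hb1 : Metric.infDist (z + x₁) C ≤ ‖x₁‖ := by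
    have := Metric.infDist_le_dist_of_mem (x := z + x₁) hz
    simpa [dist_eq_norm] using this
  have hc1 : Metric.infDist (z + x₂) C ≤ ‖x₂‖ := by
    have := Metric.infDist_le_dist_of_mem (x := z + x₂) hz
    simpa [dist_eq_norm] using this
  have hlip : |Metric.infDist (z + x₁ + x₂) C - Metric.infDist (z + x₁) C| ≤ ‖x₂‖ := by
    rw [abs_sub_le_iff]
    constructor
    · have := Metric.infDist_le_infDist_add_dist (s := C) (x := z + x₁ + x₂) (y := z + x₁)
      rw [dist_eq_norm] at this
      simp only [add_sub_cancel_left] at this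
      linarith
    · have := Metric.infDist_le_infDist_add_dist (s := C) (x := z + x₁) (y := z + x₁ + x₂)
      rw [dist_eq_norm] at this
      have e : z + x₁ - (z + x₁ + x₂) = -x₂ := by abel
      rw [e, norm_neg] at this
      linarith
  have h1 : ‖x₂‖ ≥ 0 := norm_nonneg _
  rw [hz0]
  rw [abs_le] at hlip ⊢
  constructor <;> nlinarith [sq_nonneg (Metric.infDist (z + x₂) C)]
end

section
/- Let X be a real Hilbert space and C ⊆ X a nonempty closed convex subset. Let d₂(y) = dist(y, C)². Then for all z, x ∈ X: 0 ≤ d₂(z+2x) − 2·d₂(z+x) + d₂(z) ≤ 2‖x‖². -/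
open Metric

lemma exists_proj {X : Type*} [NormedAddCommGroup X] [InnerProductSpace ℝ X] [CompleteSpace X]
    (C : Set X) (hC : C.Nonempty) (hclosed : IsClosed C) (hconv : Convex ℝ C) (u : X) :
    ∃ v ∈ C, ‖u - v‖ = Metric.infDist u C := by
  obtain ⟨v, hv, hve⟩ := exists_norm_eq_iInf_of_complete_convex hC
    hclosed.isComplete hconv u
  refine ⟨v, hv, ?_⟩
  rw [hve, Metric.infDist_eq_iInf]
  congr 1; ext w; rw [dist_eq_norm]

theorem stmt2 {X : Type*} [NormedAddCommGroup X] [InnerProductSpace ℝ X] [CompleteSpace X]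
    (C : Set X) (hC : C.Nonempty) (hclosed : IsClosed C) (hconv : Convex ℝ C)
    (z x : X) :
    0 ≤ (Metric.infDist (z + 2 • x) C) ^ 2 - 2 * (Metric.infDist (z + x) C) ^ 2
        + (Metric.infDist z C) ^ 2
    ∧ (Metric.infDist (z + 2 • x) C) ^ 2 - 2 * (Metric.infDist (z + x) C) ^ 2
        + (Metric.infDist z C) ^ 2 ≤ 2 * ‖x‖ ^ 2 := by
  constructor
  · -- lower bound: convexity
    obtain ⟨q, hq, hqe⟩ := exists_proj C hC hclosed hconv z
    obtain ⟨r, hr, hre⟩ := exists_proj C hC hclosed hconv (z + 2 • x)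
    set a := Metric.infDist z C with ha
    set b := Metric.infDist (z + 2 • x) C with hb
    have hm : (1/2 : ℝ) • q + (1/2 : ℝ) • r ∈ C :=
      hconv hq hr (by norm_num) (by norm_num) (by norm_num)
    have h1 : Metric.infDist (z + x) C ≤ (a + b) / 2 := by
      refine le_trans (Metric.infDist_le_dist_of_mem hm) ?_
      rw [dist_eq_norm]
      have heq : z + x - ((1/2 : ℝ) • q + (1/2 : ℝ) • r)
          = (1/2 : ℝ) • (z - q) + (1/2 : ℝ) • (z + 2 • x - r) := by
        rw [two_smul]; module
      rw [heq]
      calc ‖(1/2 : ℝ) • (z - q) + (1/2 : ℝ) • (z + 2 • x - r)‖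
          ≤ ‖(1/2 : ℝ) • (z - q)‖ + ‖(1/2 : ℝ) • (z + 2 • x - r)‖ := norm_add_le _ _
        _ = (a + b) / 2 := by
            rw [norm_smul, norm_smul, ← hqe, ← hre]; simp; ring
    have h0 : (0 : ℝ) ≤ Metric.infDist (z + x) C := Metric.infDist_nonneg
    have h2 : Metric.infDist (z + x) C ^ 2 ≤ ((a + b) / 2) ^ 2 := by
      exact pow_le_pow_left₀ h0 h1 2
    have ha0 : 0 ≤ a := Metric.infDist_nonneg
    have hb0 : 0 ≤ b := Metric.infDist_nonneg
    nlinarith [sq_nonneg (a - b)]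
  · -- upper bound: parallelogram
    obtain ⟨p, hp, hpe⟩ := exists_proj C hC hclosed hconv (z + x)
    set v := z + x - p with hv
    have h1 : Metric.infDist (z + 2 • x) C ≤ ‖v + x‖ := by
      refine le_trans (Metric.infDist_le_dist_of_mem hp) ?_
      rw [dist_eq_norm]
      apply le_of_eq; congr 1; rw [hv, two_smul]; abel
    have h2 : Metric.infDist z C ≤ ‖v - x‖ := by
      refine le_trans (Metric.infDist_le_dist_of_mem hp) ?_
      rw [dist_eq_norm]
      apply le_of_eq; congr 1; rw [hv]; abel
    have h3 : Metric.infDist (z + x) C = ‖v‖ := hpe.symm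
    have hpar : ‖v + x‖ ^ 2 + ‖v - x‖ ^ 2 = 2 * ‖v‖ ^ 2 + 2 * ‖x‖ ^ 2 := by
      have e1 := norm_add_sq_real v x
      have e2 := norm_sub_sq_real v x
      linarith
    have h1' : Metric.infDist (z + 2 • x) C ^ 2 ≤ ‖v + x‖ ^ 2 :=
      pow_le_pow_left₀ Metric.infDist_nonneg h1 2
    have h2' : Metric.infDist z C ^ 2 ≤ ‖v - x‖ ^ 2 :=
      pow_le_pow_left₀ Metric.infDist_nonneg h2 2
    rw [h3]
    nlinarith
end

section
/- Let X be a real Hilbert space and C ⊆ X a nonempty subset, d₂(y) = dist(y, C)². Then for all z, x ∈ X: d₂(z+2x) − 2·d₂(z+x) + d₂(z) ≤ 2‖x‖². -/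
theorem stmt3 {X : Type*} [NormedAddCommGroup X] [InnerProductSpace ℝ X] [CompleteSpace X]
    (C : Set X) (hC : C.Nonempty) (z x : X) :
    (Metric.infDist (z + 2 • x) C) ^ 2 - 2 * (Metric.infDist (z + x) C) ^ 2
      + (Metric.infDist z C) ^ 2 ≤ 2 * ‖x‖ ^ 2 := by
  set D := Metric.infDist (z + x) C with hD
  have hD0 : 0 ≤ D := Metric.infDist_nonneg
  refine le_of_forall_pos_le_add fun δ hδ => ?_
  set ε : ℝ := min 1 (δ / (2 * (2 * D + 1))) with hε
  have hεpos : 0 < ε := lt_min one_pos (by positivity)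
  obtain ⟨c, hcC, hcd⟩ := (Metric.infDist_lt_iff hC).1
    (show D < D + ε by linarith)
  have h1 : Metric.infDist (z + 2 • x) C ≤ ‖(z + 2 • x) - c‖ := by
    simpa [dist_eq_norm] using Metric.infDist_le_dist_of_mem (x := z + 2 • x) hcC
  have h2 : Metric.infDist z C ≤ ‖z - c‖ := by
    simpa [dist_eq_norm] using Metric.infDist_le_dist_of_mem (x := z) hcC
  have hcd' : ‖(z + x) - c‖ < D + ε := by
    simpa [dist_eq_norm] using hcd
  have hpar : ‖(z + 2 • x) - c‖ ^ 2 + ‖z - c‖ ^ 2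
      = 2 * ‖(z + x) - c‖ ^ 2 + 2 * ‖x‖ ^ 2 := by
    have := parallelogram_law_with_norm ℝ ((z + x) - c) x
    have e1 : (z + x) - c + x = (z + 2 • x) - c := by
      simp [two_smul]; abel
    have e2 : (z + x) - c - x = z - c := by abel
    rw [e1, e2] at this
    nlinarith [this]
  have hn1 : 0 ≤ Metric.infDist (z + 2 • x) C := Metric.infDist_nonneg
  have hn0 : 0 ≤ Metric.infDist z C := Metric.infDist_nonneg
  have q1 : Metric.infDist (z + 2 • x) C ^ 2 ≤ ‖(z + 2 • x) - c‖ ^ 2 :=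
    pow_le_pow_left₀ hn1 h1 2
  have q2 : Metric.infDist z C ^ 2 ≤ ‖z - c‖ ^ 2 :=
    pow_le_pow_left₀ hn0 h2 2
  have hεle : ε ≤ δ / (2 * (2 * D + 1)) := min_le_right _ _
  have hε1 : ε ≤ 1 := min_le_left _ _
  have hmid : ‖(z + x) - c‖ ^ 2 ≤ D ^ 2 + δ / 2 := by
    have hnn : 0 ≤ ‖(z + x) - c‖ := norm_nonneg _
    have : ‖(z + x) - c‖ ^ 2 < (D + ε) ^ 2 := by
      nlinarith
    have hεb : ε * (2 * D + 1) ≤ δ / 2 := by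
      rw [le_div_iff₀ (by positivity)] at hεle
      linarith
    nlinarith
  nlinarith [hpar]
end

section
/- Let X be a real Hilbert space and C ⊆ X a nonempty convex set, d₂(y) = dist(y, C)². Then for all z, x ∈ X: 0 ≤ d₂(z+x) − 2·d₂(z) + d₂(z−x) ≤ 2‖x‖². -/
/-!
The lower bound is midpoint convexity of `d₂`: the distance to a convex set is convex (combine
near-minimizers for the two points), and squaring preserves convexity of nonnegative functions.
The upper bound compares with a single point `c ∈ C` near `z`, for which the parallelogram law gives
`‖z + x - c‖² + ‖z - x - c‖² = 2‖z - c‖² + 2‖x‖²`.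
-/

open Metric Set

theorem Convex.convexOn_infDist {E : Type*} [SeminormedAddCommGroup E] [NormedSpace ℝ E]
    {s : Set E} (hs : Convex ℝ s) : ConvexOn ℝ univ (infDist · s) := by
  refine ⟨convex_univ, fun u _ v _ a b ha hb hab => ?_⟩
  rcases s.eq_empty_or_nonempty with rfl | hne
  · simp [infDist_empty]
  refine le_of_forall_pos_le_add fun ε hε => ?_
  obtain ⟨p, hp, hup⟩ := (infDist_lt_iff hne).1 (lt_add_of_pos_right (infDist u s) hε)
  obtain ⟨q, hq, hvq⟩ := (infDist_lt_iff hne).1 (lt_add_of_pos_right (infDist v s) hε)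
  calc infDist (a • u + b • v) s
      ≤ dist (a • u + b • v) (a • p + b • q) := infDist_le_dist_of_mem (hs hp hq ha hb hab)
    _ ≤ dist (a • u) (a • p) + dist (b • v) (b • q) := dist_add_add_le _ _ _ _
    _ = a * dist u p + b * dist v q := by
      rw [dist_smul₀, dist_smul₀, Real.norm_of_nonneg ha, Real.norm_of_nonneg hb]
    _ ≤ a * (infDist u s + ε) + b * (infDist v s + ε) := by gcongr
    _ = a * infDist u s + b * infDist v s + ε := by linear_combination ε * hab

theorem le_infDist_sq_of_forall_le_dist_sq {α : Type*} [PseudoMetricSpace α] {s : Set α} {x : α}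
    {r : ℝ} (hs : s.Nonempty) (h : ∀ y ∈ s, r ≤ dist x y ^ 2) : r ≤ infDist x s ^ 2 := by
  rcases le_or_gt r 0 with hr | hr
  · exact hr.trans (sq_nonneg _)
  have hsqrt : √r ≤ infDist x s :=
    (le_infDist hs).2 fun y hy => (Real.sqrt_le_left dist_nonneg).2 (h y hy)
  calc r = √r ^ 2 := (Real.sq_sqrt hr.le).symm
    _ ≤ infDist x s ^ 2 := by gcongr

theorem infDist_add_sq_add_infDist_sub_sq_le {E : Type*} [NormedAddCommGroup E]
    [InnerProductSpace ℝ E] (s : Set E) (z x : E) :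
    infDist (z + x) s ^ 2 + infDist (z - x) s ^ 2 ≤ 2 * infDist z s ^ 2 + 2 * ‖x‖ ^ 2 := by
  rcases s.eq_empty_or_nonempty with rfl | hs
  · simp only [infDist_empty]
    nlinarith [sq_nonneg ‖x‖]
  suffices (infDist (z + x) s ^ 2 + infDist (z - x) s ^ 2) / 2 - ‖x‖ ^ 2 ≤ infDist z s ^ 2 by
    linarith
  refine le_infDist_sq_of_forall_le_dist_sq hs fun c hc => ?_
  have hplus : infDist (z + x) s ^ 2 ≤ ‖z - c + x‖ ^ 2 := by
    rw [sub_add_eq_add_sub, ← dist_eq_norm]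
    gcongr
    · exact infDist_nonneg
    · exact infDist_le_dist_of_mem hc
  have hminus : infDist (z - x) s ^ 2 ≤ ‖z - c - x‖ ^ 2 := by
    rw [sub_right_comm, ← dist_eq_norm]
    gcongr
    · exact infDist_nonneg
    · exact infDist_le_dist_of_mem hc
  have := parallelogram_law_with_norm ℝ (z - c) x
  rw [dist_eq_norm]
  linarith

theorem stmt5_general {X : Type*} [NormedAddCommGroup X] [InnerProductSpace ℝ X]
    (C : Set X) (hconv : Convex ℝ C) (z x : X) :
    0 ≤ (Metric.infDist (z + x) C) ^ 2 - 2 * (Metric.infDist z C) ^ 2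
        + (Metric.infDist (z - x) C) ^ 2
    ∧ (Metric.infDist (z + x) C) ^ 2 - 2 * (Metric.infDist z C) ^ 2
        + (Metric.infDist (z - x) C) ^ 2 ≤ 2 * ‖x‖ ^ 2 := by
  have hmid : (1 / 2 : ℝ) • (z + x) + (1 / 2 : ℝ) • (z - x) = z := by module
  have hsq := (hconv.convexOn_infDist.pow (fun _ _ => infDist_nonneg) 2).2
    (mem_univ (z + x)) (mem_univ (z - x)) (by norm_num : (0 : ℝ) ≤ 1 / 2)
    (by norm_num : (0 : ℝ) ≤ 1 / 2) (by norm_num)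
  simp only [hmid, Pi.pow_apply, smul_eq_mul] at hsq
  constructor
  · linarith
  · linarith [infDist_add_sq_add_infDist_sub_sq_le C z x]

theorem stmt5 {X : Type*} [NormedAddCommGroup X] [InnerProductSpace ℝ X] [CompleteSpace X]
    (C : Set X) (hC : C.Nonempty) (hconv : Convex ℝ C) (z x : X) :
    0 ≤ (Metric.infDist (z + x) C) ^ 2 - 2 * (Metric.infDist z C) ^ 2
        + (Metric.infDist (z - x) C) ^ 2
    ∧ (Metric.infDist (z + x) C) ^ 2 - 2 * (Metric.infDist z C) ^ 2
        + (Metric.infDist (z - x) C) ^ 2 ≤ 2 * ‖x‖ ^ 2 :=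
  stmt5_general C hconv z x
end

section
/- Let X be a normed space, f : X → ℝ, x₀ ∈ X. Define f^{(2)+}(x₀; x) = sup_{y∈X} limsup_{λ↓0} (1/λ²)·(f(x₀+λy+λx) − 2f(x₀+λy) + f(x₀+λy−λx)). If f is convex, then x ↦ f^{(2)+}(x₀; x) is convex (as a function with values in the extended reals). -/
open Filter

section Aux

lemma EReal_mul_strictMono {a : ℝ} (ha : 0 < a) :
    StrictMono (fun x : EReal => (a : EReal) * x) := by
  have h1 : (0 : EReal) < ((a⁻¹ : ℝ) : EReal) := by exact_mod_cast inv_pos.mpr ha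
  have h2 := EReal.strictMono_div_right_of_pos h1 (EReal.coe_ne_top _)
  have key : ∀ x : EReal, x / ((a⁻¹ : ℝ) : EReal) = (a : EReal) * x := by
    intro x
    show x * ((a⁻¹ : ℝ) : EReal)⁻¹ = (a : EReal) * x
    rw [← EReal.coe_inv, inv_inv, mul_comm]
  intro x y hxy
  simpa only [key] using h2 hxy

lemma EReal_mul_monotone {a : ℝ} (ha : 0 ≤ a) :
    Monotone (fun x : EReal => (a : EReal) * x) := by
  rcases eq_or_lt_of_le ha with rfl | ha'
  · intro x y _; simp
  · exact (EReal_mul_strictMono ha').monotone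

/-- Multiplication by a positive real constant as an order isomorphism of `EReal`. -/
noncomputable def EReal_mulOrderIso (a : ℝ) (ha : 0 < a) : EReal ≃o EReal where
  toFun x := (a : EReal) * x
  invFun x := ((a⁻¹ : ℝ) : EReal) * x
  left_inv x := by
    show ((a⁻¹ : ℝ) : EReal) * ((a : EReal) * x) = x
    rw [← mul_assoc, ← EReal.coe_mul, inv_mul_cancel₀ ha.ne', EReal.coe_one, one_mul]
  right_inv x := by
    show (a : EReal) * (((a⁻¹ : ℝ) : EReal) * x) = x
    rw [← mul_assoc, ← EReal.coe_mul, mul_inv_cancel₀ ha.ne', EReal.coe_one, one_mul]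
  map_rel_iff' := by
    intro x y
    exact (EReal_mul_strictMono ha).le_iff_le

lemma EReal_limsup_coe_mul {α : Type*} {f : Filter α} [f.NeBot] {a : ℝ} (ha : 0 ≤ a)
    (u : α → EReal) :
    limsup (fun x => (a : EReal) * u x) f = (a : EReal) * limsup u f := by
  rcases eq_or_lt_of_le ha with rfl | ha'
  · simp [limsup_const]
  · exact ((EReal_mulOrderIso a ha').limsup_apply).symm

end Aux

/-- The second-order upper directional quantity
`f^{(2)+}(x₀; x) = sup_{y∈X} limsup_{λ↓0} λ⁻²(f(x₀+λy+λx) − 2f(x₀+λy) + f(x₀+λy−λx))`,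
valued in the extended reals. -/
noncomputable def secondUpperSym {X : Type*} [NormedAddCommGroup X] [NormedSpace ℝ X]
    (f : X → ℝ) (x₀ x : X) : EReal :=
  ⨆ y : X, Filter.limsup
    (fun lam : ℝ =>
      (((f (x₀ + lam • y + lam • x) - 2 * f (x₀ + lam • y)
        + f (x₀ + lam • y - lam • x)) / lam ^ 2 : ℝ) : EReal))
    (nhdsWithin (0:ℝ) (Set.Ioi 0))

theorem stmt7 {X : Type*} [NormedAddCommGroup X] [NormedSpace ℝ X]
    (f : X → ℝ) (hf : ConvexOn ℝ Set.univ f) (x₀ : X) :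
    ∀ x₁ x₂ : X, ∀ a b : ℝ, 0 ≤ a → 0 ≤ b → a + b = 1 →
      secondUpperSym f x₀ (a • x₁ + b • x₂)
        ≤ (a : EReal) * secondUpperSym f x₀ x₁ + (b : EReal) * secondUpperSym f x₀ x₂ := by
  intro x₁ x₂ a b ha hb hab
  set L : Filter ℝ := nhdsWithin (0:ℝ) (Set.Ioi 0) with hL
  -- the real-valued second difference quotient in direction `x`
  set g : X → X → ℝ → ℝ := fun x y lam =>
    (f (x₀ + lam • y + lam • x) - 2 * f (x₀ + lam • y)
      + f (x₀ + lam • y - lam • x)) / lam ^ 2 with hg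
  -- nonnegativity of the second difference quotient
  have hnonneg : ∀ (x y : X) (lam : ℝ), 0 ≤ g x y lam := by
    intro x y lam
    apply div_nonneg _ (sq_nonneg lam)
    have hmid : x₀ + lam • y =
        (1/2 : ℝ) • (x₀ + lam • y + lam • x) + (1/2 : ℝ) • (x₀ + lam • y - lam • x) := by
      module
    have := hf.2 (Set.mem_univ (x₀ + lam • y + lam • x))
      (Set.mem_univ (x₀ + lam • y - lam • x))
      (by norm_num : (0:ℝ) ≤ 1/2) (by norm_num : (0:ℝ) ≤ 1/2) (by norm_num)
    rw [← hmid] at this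
    rw [smul_eq_mul, smul_eq_mul] at this
    linarith
  -- pointwise convexity inequality for the second difference quotient
  have hpt : ∀ (y : X) (lam : ℝ),
      g (a • x₁ + b • x₂) y lam ≤ a * g x₁ y lam + b * g x₂ y lam := by
    intro y lam
    have hplus : x₀ + lam • y + lam • (a • x₁ + b • x₂) =
        a • (x₀ + lam • y + lam • x₁) + b • (x₀ + lam • y + lam • x₂) := by
      have : a • (x₀ + lam • y + lam • x₁) + b • (x₀ + lam • y + lam • x₂) =
          (a + b) • (x₀ + lam • y) + lam • (a • x₁ + b • x₂) := by module
      rw [this, hab, one_smul]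
    have hminus : x₀ + lam • y - lam • (a • x₁ + b • x₂) =
        a • (x₀ + lam • y - lam • x₁) + b • (x₀ + lam • y - lam • x₂) := by
      have : a • (x₀ + lam • y - lam • x₁) + b • (x₀ + lam • y - lam • x₂) =
          (a + b) • (x₀ + lam • y) - lam • (a • x₁ + b • x₂) := by module
      rw [this, hab, one_smul]
    have h1 : f (x₀ + lam • y + lam • (a • x₁ + b • x₂)) ≤
        a * f (x₀ + lam • y + lam • x₁) + b * f (x₀ + lam • y + lam • x₂) := by
      rw [hplus]
      exact hf.2 (Set.mem_univ _) (Set.mem_univ _) ha hb hab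
    have h2 : f (x₀ + lam • y - lam • (a • x₁ + b • x₂)) ≤
        a * f (x₀ + lam • y - lam • x₁) + b * f (x₀ + lam • y - lam • x₂) := by
      rw [hminus]
      exact hf.2 (Set.mem_univ _) (Set.mem_univ _) ha hb hab
    rcases eq_or_ne lam 0 with rfl | hlam
    · simp [hg]
    · have hl2 : (0:ℝ) < lam ^ 2 := by positivity
      rw [hg]
      simp only
      have hE : a * ((f (x₀ + lam • y + lam • x₁) - 2 * f (x₀ + lam • y)
            + f (x₀ + lam • y - lam • x₁)) / lam ^ 2)
          + b * ((f (x₀ + lam • y + lam • x₂) - 2 * f (x₀ + lam • y)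
            + f (x₀ + lam • y - lam • x₂)) / lam ^ 2)
          = (a * (f (x₀ + lam • y + lam • x₁) - 2 * f (x₀ + lam • y)
            + f (x₀ + lam • y - lam • x₁))
            + b * (f (x₀ + lam • y + lam • x₂) - 2 * f (x₀ + lam • y)
            + f (x₀ + lam • y - lam • x₂))) / lam ^ 2 := by ring
      rw [hE]
      apply (div_le_div_iff_of_pos_right hl2).mpr
      have h3 : a * f (x₀ + lam • y) + b * f (x₀ + lam • y) = f (x₀ + lam • y) := by
        rw [← add_mul, hab, one_mul]
      linarith
  -- now the limsup/EReal part
  rw [secondUpperSym]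
  apply iSup_le
  intro y
  set u : ℝ → EReal := fun lam => ((a * g x₁ y lam : ℝ) : EReal) with hu
  set v : ℝ → EReal := fun lam => ((b * g x₂ y lam : ℝ) : EReal) with hv
  have hunneg : (0 : EReal) ≤ limsup u L := by
    refine le_limsup_of_frequently_le ?_ (by isBoundedDefault)
    refine Eventually.frequently (Eventually.of_forall fun lam => ?_)
    simp only [hu]
    exact_mod_cast mul_nonneg ha (hnonneg x₁ y lam)
  have hvnneg : (0 : EReal) ≤ limsup v L := by
    refine le_limsup_of_frequently_le ?_ (by isBoundedDefault)
    refine Eventually.frequently (Eventually.of_forall fun lam => ?_)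
    simp only [hv]
    exact_mod_cast mul_nonneg hb (hnonneg x₂ y lam)
  have step1 : limsup
      (fun lam : ℝ =>
        (((f (x₀ + lam • y + lam • (a • x₁ + b • x₂)) - 2 * f (x₀ + lam • y)
          + f (x₀ + lam • y - lam • (a • x₁ + b • x₂))) / lam ^ 2 : ℝ) : EReal)) L
      ≤ limsup (u + v) L := by
    refine limsup_le_limsup (Eventually.of_forall fun lam => ?_)
    have := hpt y lam
    simp only [hu, hv, Pi.add_apply, ← EReal.coe_add]
    exact_mod_cast this
  have step2 : limsup (u + v) L ≤ limsup u L + limsup v L := by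
    apply EReal.limsup_add_le
    · left
      intro h
      rw [h] at hunneg
      exact absurd hunneg (by simp)
    · right
      intro h
      rw [h] at hvnneg
      exact absurd hvnneg (by simp)
  have step3u : limsup u L = (a : EReal) * limsup
      (fun lam : ℝ => ((g x₁ y lam : ℝ) : EReal)) L := by
    rw [← EReal_limsup_coe_mul ha]
    simp only [hu, EReal.coe_mul]
  have step3v : limsup v L = (b : EReal) * limsup
      (fun lam : ℝ => ((g x₂ y lam : ℝ) : EReal)) L := by
    rw [← EReal_limsup_coe_mul hb]
    simp only [hv, EReal.coe_mul]
  have step4u : limsup (fun lam : ℝ => ((g x₁ y lam : ℝ) : EReal)) L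
      ≤ secondUpperSym f x₀ x₁ := by
    rw [secondUpperSym]
    simp only [hg, hL]
    exact le_iSup_iff.mpr fun c hc => hc y
  have step4v : limsup (fun lam : ℝ => ((g x₂ y lam : ℝ) : EReal)) L
      ≤ secondUpperSym f x₀ x₂ := by
    rw [secondUpperSym]
    simp only [hg, hL]
    exact le_iSup_iff.mpr fun c hc => hc y
  calc limsup _ L ≤ limsup (u + v) L := step1
    _ ≤ limsup u L + limsup v L := step2
    _ ≤ (a : EReal) * secondUpperSym f x₀ x₁ + (b : EReal) * secondUpperSym f x₀ x₂ := by
        rw [step3u, step3v]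
        exact add_le_add (EReal_mul_monotone ha step4u) (EReal_mul_monotone hb step4v)
end

section
/- Let X be a normed space, J a finite index set, and f_i : X → ℝ (i ∈ J) continuous functions each satisfying the {2}-Lipschitz condition at x₀ (|f_i(x₀+2x) − 2f_i(x₀+x) + f_i(x₀)| ≤ K‖x‖² for small x). Let f(x) = max_{i∈J} f_i(x) and J(x₀) = {i ∈ J : f_i(x₀) = f(x₀)}. Then for every x ∈ X, f^{(2)+}(x₀; x) ≤ max_{i∈J(x₀)} f_i^{(2)+}(x₀; x), where g^{(2)+}(x₀; x) = limsup_{t↓0} (1/t²)·(g(x₀+2tx) − 2g(x₀+tx) + g(x₀)). -/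
open Filter Set

theorem stmt11 {X : Type*} [NormedAddCommGroup X] [NormedSpace ℝ X]
    {ι : Type*} [Fintype ι] [Nonempty ι]
    (fi : ι → X → ℝ) (x₀ : X)
    (hcont : ∀ i, Continuous (fi i))
    (hlip : ∀ i, ∃ K > (0:ℝ), ∃ ε > (0:ℝ), ∀ x : X, ‖x‖ ≤ ε →
      |fi i (x₀ + 2 • x) - 2 * fi i (x₀ + x) + fi i x₀| ≤ K * ‖x‖ ^ 2)
    (f : X → ℝ) (hf : ∀ x, f x = ⨆ i, fi i x) (x : X) :
    Filter.limsup
      (fun t : ℝ =>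
        (((f (x₀ + (2 * t) • x) - 2 * f (x₀ + t • x) + f x₀) / t ^ 2 : ℝ) : EReal))
      (nhdsWithin (0:ℝ) (Set.Ioi 0))
    ≤ ⨆ i : ι, ⨆ (_ : fi i x₀ = f x₀), Filter.limsup
      (fun t : ℝ =>
        (((fi i (x₀ + (2 * t) • x) - 2 * fi i (x₀ + t • x) + fi i x₀) / t ^ 2 : ℝ) : EReal))
      (nhdsWithin (0:ℝ) (Set.Ioi 0)) := by
  -- f y is a finite sup; it dominates each fi i y
  have hle : ∀ (i : ι) (y : X), fi i y ≤ f y := by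
    intro i y
    rw [hf]
    exact le_ciSup (f := fun j => fi j y) (Finite.bddAbove_range _) i
  -- an active index i₀
  obtain ⟨i₀, hi₀⟩ : ∃ i₀, ∀ j, fi j x₀ ≤ fi i₀ x₀ := Finite.exists_max _
  have hi₀A : fi i₀ x₀ = f x₀ := le_antisymm (hle i₀ x₀) (by rw [hf]; exact ciSup_le hi₀)
  -- the set of active indices, as Finset
  set A : Finset ι := Finset.univ.filter (fun i => fi i x₀ = f x₀) with hA
  have hAne : A.Nonempty := ⟨i₀, by simp [hA, hi₀A]⟩
  -- eventually near x₀, every inactive index is strictly dominated by fi i₀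
  have hev : ∀ᶠ y in nhds x₀, ∀ i, fi i x₀ ≠ f x₀ → fi i y < fi i₀ y := by
    rw [eventually_all]
    intro i
    by_cases hi : fi i x₀ = f x₀
    · exact Eventually.of_forall (fun y h => absurd hi h)
    · have hlt : fi i x₀ < fi i₀ x₀ := lt_of_le_of_ne (hi₀A ▸ hle i x₀) (hi₀A ▸ hi)
      have : ∀ᶠ y in nhds x₀, fi i y < fi i₀ y :=
        (((hcont i).tendsto x₀).eventually_lt ((hcont i₀).tendsto x₀) hlt)
      exact this.mono (fun y h _ => h)
  -- near x₀, f y is attained at an active index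
  have hkey : ∀ᶠ y in nhds x₀, ∃ i ∈ A, f y = fi i y := by
    refine hev.mono (fun y hy => ?_)
    obtain ⟨j, hj⟩ : ∃ j, ∀ k, fi k y ≤ fi j y := Finite.exists_max _
    have hfy : f y = fi j y := le_antisymm (by rw [hf]; exact ciSup_le hj) (hle j y)
    by_cases hjA : fi j x₀ = f x₀
    · exact ⟨j, by simp [hA, hjA], hfy⟩
    · exact absurd (hy j hjA) (not_lt.2 (hj i₀))
  -- transfer to t → 0+
  have htend : Tendsto (fun t : ℝ => x₀ + t • x) (nhdsWithin 0 (Set.Ioi 0)) (nhds x₀) := by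
    have : Tendsto (fun t : ℝ => x₀ + t • x) (nhds 0) (nhds x₀) := by
      have hc : Continuous (fun t : ℝ => x₀ + t • x) := by continuity
      simpa using hc.tendsto 0
    exact this.mono_left nhdsWithin_le_nhds
  have htend2 : Tendsto (fun t : ℝ => x₀ + (2 * t) • x) (nhdsWithin 0 (Set.Ioi 0)) (nhds x₀) := by
    have : Tendsto (fun t : ℝ => x₀ + t • x) (nhds 0) (nhds x₀) := by
      have hc : Continuous (fun t : ℝ => x₀ + t • x) := by continuity
      simpa using hc.tendsto 0
    refine (this.comp ?_).mono_left nhdsWithin_le_nhds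
    have : Tendsto (fun t : ℝ => 2 * t) (nhds (0:ℝ)) (nhds (2 * 0)) :=
      (continuous_const.mul continuous_id).tendsto 0
    simpa using this
  -- pointwise eventual bound
  have hptwise : ∀ᶠ t in nhdsWithin (0:ℝ) (Set.Ioi 0),
      ((((f (x₀ + (2 * t) • x) - 2 * f (x₀ + t • x) + f x₀) / t ^ 2 : ℝ)) : EReal)
        ≤ A.sup' hAne (fun i =>
          (((fi i (x₀ + (2 * t) • x) - 2 * fi i (x₀ + t • x) + fi i x₀) / t ^ 2 : ℝ) : EReal)) := by
    filter_upwards [htend2.eventually hkey, self_mem_nhdsWithin] with t ht ht0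
    obtain ⟨j, hjA, hjeq⟩ := ht
    have hjx₀ : fi j x₀ = f x₀ := by simpa [hA] using hjA
    have hnum : f (x₀ + (2 * t) • x) - 2 * f (x₀ + t • x) + f x₀
        ≤ fi j (x₀ + (2 * t) • x) - 2 * fi j (x₀ + t • x) + fi j x₀ := by
      rw [hjeq, ← hjx₀]
      have := hle j (x₀ + t • x)
      nlinarith
    have ht0' : (0:ℝ) < t := ht0
    have ht2 : (0:ℝ) < t ^ 2 := by positivity
    have hq : (f (x₀ + (2 * t) • x) - 2 * f (x₀ + t • x) + f x₀) / t ^ 2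
        ≤ (fi j (x₀ + (2 * t) • x) - 2 * fi j (x₀ + t • x) + fi j x₀) / t ^ 2 :=
      div_le_div_of_nonneg_right hnum ht2.le |>.trans_eq rfl
    calc ((((f (x₀ + (2 * t) • x) - 2 * f (x₀ + t • x) + f x₀) / t ^ 2 : ℝ)) : EReal)
        ≤ (((fi j (x₀ + (2 * t) • x) - 2 * fi j (x₀ + t • x) + fi j x₀) / t ^ 2 : ℝ) : EReal) := by
          exact_mod_cast hq
      _ ≤ _ := Finset.le_sup' (f := fun i => (((fi i (x₀ + (2 * t) • x) - 2 * fi i (x₀ + t • x) + fi i x₀) / t ^ 2 : ℝ) : EReal)) hjA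
  -- conclude
  calc Filter.limsup _ (nhdsWithin (0:ℝ) (Set.Ioi 0))
      ≤ Filter.limsup (fun t => A.sup' hAne (fun i =>
          (((fi i (x₀ + (2 * t) • x) - 2 * fi i (x₀ + t • x) + fi i x₀) / t ^ 2 : ℝ) : EReal)))
          (nhdsWithin (0:ℝ) (Set.Ioi 0)) := limsup_le_limsup hptwise
    _ = A.sup' hAne (fun i => Filter.limsup (fun t =>
          (((fi i (x₀ + (2 * t) • x) - 2 * fi i (x₀ + t • x) + fi i x₀) / t ^ 2 : ℝ) : EReal))
          (nhdsWithin (0:ℝ) (Set.Ioi 0))) := limsup_finset_sup' hAne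
    _ ≤ _ := by
        apply Finset.sup'_le
        intro i hiA
        have hix₀ : fi i x₀ = f x₀ := by simpa [hA] using hiA
        exact le_iSup_of_le i (le_iSup_of_le hix₀ le_rfl)
end

section
/- Let X be a normed space, f : X → ℝ, and suppose x₀ is a local minimum of f on X and there exist δ > 0, K > 0 such that |f(x₀+x) − f(x₀)| ≤ K‖x‖² for ‖x‖ ≤ δ. Then f^{(2)+}(x₀; x) := limsup_{λ↓0} (1/λ²)·(f(x₀+2λx) − 2f(x₀+λx) + f(x₀)) ≥ 0 for every x ∈ X. -/
/-!
With `a λ = λ⁻² (f (x₀ + λ x) - f x₀)` the second difference quotient equals `4 a (2λ) - 2 a λ`,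
and `a` is nonnegative (local minimum) and bounded (quadratic growth) for small `λ > 0`.
If the quotient stayed below some `c < 0` on `(0, t / 2)`, then the supremum `S` of `a` on
`(0, t)` would satisfy `4 S ≤ 2 S + c`, i.e. `2 S ≤ c < 0`, contradicting `a ≥ 0`.
-/

open Filter Set Topology

noncomputable def quadDiffQuot {X : Type*} [AddCommGroup X] [Module ℝ X]
    (f : X → ℝ) (x₀ x : X) (lam : ℝ) : ℝ :=
  (f (x₀ + lam • x) - f x₀) / lam ^ 2

theorem second_difference_div_sq_eq {X : Type*} [AddCommGroup X] [Module ℝ X]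
    (f : X → ℝ) (x₀ x : X) {lam : ℝ} (hlam : lam ≠ 0) :
    (f (x₀ + (2 * lam) • x) - 2 * f (x₀ + lam • x) + f x₀) / lam ^ 2 =
      4 * quadDiffQuot f x₀ x (2 * lam) - 2 * quadDiffQuot f x₀ x lam := by
  simp only [quadDiffQuot]
  field_simp
  ring

section QuadDiffQuot

variable {X : Type*} [NormedAddCommGroup X] [NormedSpace ℝ X] {f : X → ℝ} {x₀ : X}

theorem IsLocalMin.eventually_quadDiffQuot_nonneg (hmin : IsLocalMin f x₀) (x : X) :
    ∀ᶠ lam in 𝓝 (0 : ℝ), 0 ≤ quadDiffQuot f x₀ x lam := by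
  have hline : ContinuousAt (fun lam : ℝ => x₀ + lam • x) 0 := by fun_prop
  have hmin_line : IsLocalMin (fun lam : ℝ => f (x₀ + lam • x)) 0 :=
    IsLocalMin.comp_continuous (by simpa using hmin) hline
  filter_upwards [hmin_line] with lam hlam
  simp only [zero_smul, add_zero] at hlam
  exact div_nonneg (sub_nonneg.2 hlam) (sq_nonneg lam)

theorem eventually_quadDiffQuot_le {δ K : ℝ} (hδ : 0 < δ)
    (hquad : ∀ y : X, ‖y‖ ≤ δ → f (x₀ + y) - f x₀ ≤ K * ‖y‖ ^ 2) (x : X) :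
    ∀ᶠ lam in 𝓝[≠] (0 : ℝ), quadDiffQuot f x₀ x lam ≤ K * ‖x‖ ^ 2 := by
  have hsmall : ∀ᶠ lam in 𝓝 (0 : ℝ), ‖lam • x‖ ≤ δ := by
    have hcont : Continuous fun lam : ℝ => ‖lam • x‖ := by fun_prop
    exact (hcont.tendsto' 0 0 (by simp)).eventually (eventually_le_nhds hδ)
  filter_upwards [nhdsWithin_le_nhds hsmall, self_mem_nhdsWithin] with lam hlam (hne : lam ≠ 0)
  rw [quadDiffQuot, div_le_iff₀ (by positivity)]
  calc f (x₀ + lam • x) - f x₀ ≤ K * ‖lam • x‖ ^ 2 := hquad _ hlam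
    _ = K * ‖x‖ ^ 2 * lam ^ 2 := by rw [norm_smul, Real.norm_eq_abs, mul_pow, sq_abs]; ring

end QuadDiffQuot

theorem two_mul_le_of_four_mul_comp_two_mul_sub_le {a : ℝ → ℝ} {t c M : ℝ}
    (hbdd : ∀ μ ∈ Ioo 0 t, a μ ≤ M)
    (hstep : ∀ lam ∈ Ioo 0 (t / 2), 4 * a (2 * lam) - 2 * a lam ≤ c) :
    ∀ μ ∈ Ioo 0 t, 2 * a μ ≤ c := by
  intro μ hμ
  have hbdd' : BddAbove (a '' Ioo 0 t) := ⟨M, forall_mem_image.2 hbdd⟩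
  set S := sSup (a '' Ioo 0 t)
  have hle_S : ∀ ν ∈ Ioo 0 t, a ν ≤ S := fun ν hν => le_csSup hbdd' (mem_image_of_mem a hν)
  have hS : S ≤ (2 * S + c) / 4 := by
    refine csSup_le ((nonempty_of_mem hμ).image a) (forall_mem_image.2 fun ν hν => ?_)
    have hhalf : ν / 2 ∈ Ioo 0 (t / 2) := ⟨by linarith [hν.1], by linarith [hν.2]⟩
    have hstep_ν : 4 * a ν - 2 * a (ν / 2) ≤ c := by
      simpa only [mul_div_cancel₀ ν two_ne_zero] using hstep _ hhalf
    have hle_half : a (ν / 2) ≤ S := hle_S _ ⟨hhalf.1, by linarith [hν.1, hν.2]⟩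
    rw [le_div_iff₀' four_pos]
    linarith
  linarith [hle_S μ hμ]

theorem eventually_two_mul_le_of_eventually_four_mul_comp_two_mul_sub_le {a : ℝ → ℝ} {c M : ℝ}
    (hbdd : ∀ᶠ lam in 𝓝[>] 0, a lam ≤ M)
    (hstep : ∀ᶠ lam in 𝓝[>] 0, 4 * a (2 * lam) - 2 * a lam ≤ c) :
    ∀ᶠ μ in 𝓝[>] 0, 2 * a μ ≤ c := by
  obtain ⟨t, ht, hsub⟩ := (nhdsGT_basis (0 : ℝ)).mem_iff.1 (hbdd.and hstep)
  refine mem_of_superset (Ioo_mem_nhdsGT ht)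
    (two_mul_le_of_four_mul_comp_two_mul_sub_le (fun μ hμ => (hsub hμ).1) fun lam hlam => ?_)
  exact (hsub ⟨hlam.1, hlam.2.trans (half_lt_self ht)⟩).2

theorem stmt12_general {X : Type*} [NormedAddCommGroup X] [NormedSpace ℝ X]
    (f : X → ℝ) (x₀ : X) (hmin : IsLocalMin f x₀)
    (δ K : ℝ) (hδ : 0 < δ)
    (hquad : ∀ x : X, ‖x‖ ≤ δ → |f (x₀ + x) - f x₀| ≤ K * ‖x‖ ^ 2) :
    ∀ x : X, (0 : EReal) ≤ Filter.limsup
      (fun lam : ℝ =>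
        (((f (x₀ + (2 * lam) • x) - 2 * f (x₀ + lam • x) + f x₀) / lam ^ 2 : ℝ) : EReal))
      (nhdsWithin (0:ℝ) (Set.Ioi 0)) := by
  intro x
  by_contra! hneg
  obtain ⟨c, hlim, hc⟩ := EReal.lt_iff_exists_real_btwn.1 hneg
  have hstep : ∀ᶠ lam in 𝓝[>] (0 : ℝ),
      4 * quadDiffQuot f x₀ x (2 * lam) - 2 * quadDiffQuot f x₀ x lam ≤ c := by
    filter_upwards [eventually_lt_of_limsup_lt hlim, self_mem_nhdsWithin] with lam hlam hpos
    rw [← second_difference_div_sq_eq f x₀ x (ne_of_gt hpos)]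
    exact_mod_cast hlam.le
  have hbdd := nhdsGT_le_nhdsNE 0 <|
    eventually_quadDiffQuot_le hδ (fun y hy => (abs_le.1 (hquad y hy)).2) x
  have hnonneg : ∀ᶠ lam in 𝓝[>] (0 : ℝ), 0 ≤ quadDiffQuot f x₀ x lam :=
    (hmin.eventually_quadDiffQuot_nonneg x).filter_mono nhdsWithin_le_nhds
  obtain ⟨μ, hμ_nonneg, hμ_le⟩ := (hnonneg.and
    (eventually_two_mul_le_of_eventually_four_mul_comp_two_mul_sub_le hbdd hstep)).exists
  have : c < 0 := by exact_mod_cast hc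
  linarith

theorem stmt12 {X : Type*} [NormedAddCommGroup X] [NormedSpace ℝ X]
    (f : X → ℝ) (x₀ : X) (hmin : IsLocalMin f x₀)
    (δ K : ℝ) (hδ : 0 < δ) (hK : 0 < K)
    (hquad : ∀ x : X, ‖x‖ ≤ δ → |f (x₀ + x) - f x₀| ≤ K * ‖x‖ ^ 2) :
    ∀ x : X, (0 : EReal) ≤ Filter.limsup
      (fun lam : ℝ =>
        (((f (x₀ + (2 * lam) • x) - 2 * f (x₀ + lam • x) + f x₀) / lam ^ 2 : ℝ) : EReal))
      (nhdsWithin (0:ℝ) (Set.Ioi 0)) :=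
  stmt12_general f x₀ hmin δ K hδ hquad
end

section
/- Let X be a normed space, f : X → ℝ, x₀ ∈ X. Suppose the lower second-order derivative f^{(2)−}(x₀; x) = liminf_{λ↓0} (1/λ²)·(f(x₀+2λx) − 2f(x₀+λx) + f(x₀)) exists uniformly in directions (for every ε > 0 there is δ > 0 with inf_{0<t≤δ} t⁻²(f(x₀+2tx) − 2f(x₀+tx) + f(x₀)) > f^{(2)−}(x₀;x) − ε for all ‖x‖ = 1), that |f(x₀+x) − f(x₀)| ≤ K‖x‖² near x₀, and that there exists α > 0 with f^{(2)−}(x₀; x) ≥ α‖x‖² for all x ∈ X. Then x₀ is a strict local minimum of f: there is δ > 0 and c > 0 with f(x₀+y) − f(x₀) ≥ c‖y‖² for all ‖y‖ ≤ δ. -/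
/-!
Along a unit direction `x` put `φ s = f (x₀ + s • x) - f x₀`. The uniform bound with `ε = α / 2`
gives `φ (2 s) - 2 φ s ≥ (α / 2) s²` for small `s > 0`. Telescoping over the dyadic points `t / 2ᵏ`
gives `φ t ≥ 2ⁿ φ (t / 2ⁿ) + (α / 4) t² (1 - 2⁻ⁿ)`, and `|φ s| ≤ K s²` makes
`2ⁿ φ (t / 2ⁿ) = O(2⁻ⁿ)`, so `φ t ≥ (α / 4) t²`.
-/

open Filter Topology

lemma two_pow_mul_apply_div_two_pow_add_le {φ : ℝ → ℝ} {c t : ℝ} (ht : 0 < t)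
    (hdiff : ∀ s, 0 < s → s ≤ t → c * s ^ 2 ≤ φ (2 * s) - 2 * φ s) (n : ℕ) :
    2 ^ n * φ (t / 2 ^ n) + c / 2 * (t ^ 2 - t * (t / 2 ^ n)) ≤ φ t := by
  induction n with
  | zero => simp [sq]
  | succ n ih =>
    have hhalf : t / 2 ^ n = 2 * (t / 2 ^ (n + 1)) := by rw [pow_succ]; field_simp
    have hscale : 2 ^ n * (t / 2 ^ (n + 1)) = t / 2 := by rw [pow_succ]; field_simp
    set s := t / 2 ^ (n + 1)
    have key := mul_le_mul_of_nonneg_left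
      (hdiff s (by positivity) (div_le_self ht.le (one_le_pow₀ one_le_two)))
      (pow_nonneg zero_le_two n)
    have hterm : (2 : ℝ) ^ n * (c * s ^ 2) = c * s * (t / 2) := by
      linear_combination c * s * hscale
    rw [hhalf] at ih
    rw [pow_succ]
    linarith

lemma half_mul_sq_le_of_second_diff {φ : ℝ → ℝ} {c K t : ℝ} (ht : 0 < t)
    (hdiff : ∀ s, 0 < s → s ≤ t → c * s ^ 2 ≤ φ (2 * s) - 2 * φ s)
    (hlow : ∀ s, 0 < s → s ≤ t → -(K * s ^ 2) ≤ φ s) :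
    c / 2 * t ^ 2 ≤ φ t := by
  have hbound (n : ℕ) : c / 2 * t ^ 2 - (c / 2 + K) * t * (t / 2 ^ n) ≤ φ t := by
    have hscale : 2 ^ n * (t / 2 ^ n) = t := by field_simp
    have hlow' := mul_le_mul_of_nonneg_left
      (hlow (t / 2 ^ n) (by positivity) (div_le_self ht.le (one_le_pow₀ one_le_two)))
      (pow_nonneg zero_le_two n)
    have hterm : (2 : ℝ) ^ n * -(K * (t / 2 ^ n) ^ 2) = -(K * t * (t / 2 ^ n)) := by
      linear_combination (-K * (t / 2 ^ n)) * hscale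
    linarith [two_pow_mul_apply_div_two_pow_add_le ht hdiff n]
  have hlim : Tendsto (fun n : ℕ => c / 2 * t ^ 2 - (c / 2 + K) * t * (t / 2 ^ n)) atTop
      (𝓝 (c / 2 * t ^ 2)) := by
    have := tendsto_const_nhds (x := t).div_atTop (tendsto_pow_atTop_atTop_of_one_lt one_lt_two)
    simpa using (this.const_mul ((c / 2 + K) * t)).const_sub (c / 2 * t ^ 2)
  exact le_of_tendsto' hlim hbound

theorem stmt14_general {X : Type*} [NormedAddCommGroup X] [NormedSpace ℝ X]
    (f : X → ℝ) (x₀ : X) (g : X → ℝ) (K δ₀ α : ℝ)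
    (hδ₀ : 0 < δ₀) (hα : 0 < α)
    (hunif : ∀ ε > (0:ℝ), ∃ δ > (0:ℝ), ∀ x : X, ‖x‖ = 1 →
      ∀ t : ℝ, 0 < t → t ≤ δ →
        g x - ε < (f (x₀ + (2 * t) • x) - 2 * f (x₀ + t • x) + f x₀) / t ^ 2)
    (hquad : ∀ x : X, ‖x‖ ≤ δ₀ → |f (x₀ + x) - f x₀| ≤ K * ‖x‖ ^ 2)
    (hlower : ∀ x : X, α * ‖x‖ ^ 2 ≤ g x) :
    ∃ δ > (0:ℝ), ∃ c > (0:ℝ), ∀ y : X, ‖y‖ ≤ δ →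
      c * ‖y‖ ^ 2 ≤ f (x₀ + y) - f x₀ := by
  obtain ⟨δ, hδ, hδunif⟩ := hunif (α / 2) (half_pos hα)
  refine ⟨min δ δ₀, lt_min hδ hδ₀, α / 2 / 2, by positivity, fun y hy => ?_⟩
  rcases eq_or_ne y 0 with rfl | hy0
  · simp
  set x := ‖y‖⁻¹ • y
  have hx : ‖x‖ = 1 := by simp [x, norm_smul, hy0]
  have hnorm_smul {s : ℝ} (hs : 0 < s) : ‖s • x‖ = s := by simp [norm_smul, hx, hs.le]
  have hdiff (s : ℝ) (hs : 0 < s) (hsy : s ≤ ‖y‖) :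
      α / 2 * s ^ 2 ≤ (f (x₀ + (2 * s) • x) - f x₀) - 2 * (f (x₀ + s • x) - f x₀) := by
    have hgx : α ≤ g x := by simpa [hx] using hlower x
    have hquot := hδunif x hx s hs (hsy.trans (hy.trans (min_le_left _ _)))
    rw [lt_div_iff₀ (by positivity)] at hquot
    nlinarith
  have hlow (s : ℝ) (hs : 0 < s) (hsy : s ≤ ‖y‖) :
      -(K * s ^ 2) ≤ f (x₀ + s • x) - f x₀ := by
    have hq := hquad (s • x) (by rw [hnorm_smul hs]; exact hsy.trans (hy.trans (min_le_right _ _)))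
    rw [hnorm_smul hs] at hq
    exact neg_le_of_abs_le hq
  have hy_eq : ‖y‖ • x = y := smul_inv_smul₀ (norm_ne_zero_iff.mpr hy0) y
  simpa [hy_eq] using half_mul_sq_le_of_second_diff (norm_pos_iff.mpr hy0) hdiff hlow

theorem stmt14 {X : Type*} [NormedAddCommGroup X] [NormedSpace ℝ X]
    (f : X → ℝ) (x₀ : X) (g : X → ℝ) (K δ₀ α : ℝ)
    (hK : 0 < K) (hδ₀ : 0 < δ₀) (hα : 0 < α)
    (hg : ∀ x : X, (g x : EReal) = Filter.liminf
      (fun lam : ℝ =>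
        (((f (x₀ + (2 * lam) • x) - 2 * f (x₀ + lam • x) + f x₀) / lam ^ 2 : ℝ) : EReal))
      (nhdsWithin (0:ℝ) (Set.Ioi 0)))
    (hunif : ∀ ε > (0:ℝ), ∃ δ > (0:ℝ), ∀ x : X, ‖x‖ = 1 →
      ∀ t : ℝ, 0 < t → t ≤ δ →
        g x - ε < (f (x₀ + (2 * t) • x) - 2 * f (x₀ + t • x) + f x₀) / t ^ 2)
    (hquad : ∀ x : X, ‖x‖ ≤ δ₀ → |f (x₀ + x) - f x₀| ≤ K * ‖x‖ ^ 2)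
    (hlower : ∀ x : X, α * ‖x‖ ^ 2 ≤ g x) :
    ∃ δ > (0:ℝ), ∃ c > (0:ℝ), ∀ y : X, ‖y‖ ≤ δ →
      c * ‖y‖ ^ 2 ≤ f (x₀ + y) - f x₀ :=
  stmt14_general f x₀ g K δ₀ α hδ₀ hα hunif hquad hlower
end
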